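/- arXiv:1511.08628 — 2 statements merged into one kernel-verified Lean document; each statement's English description precedes it below -/
import Mathlib

section
/- Let n ≥ 1 and let 𝕊 = {S_1, …, S_n} be a collection of finite nonempty subsets of ℝ with maximum stepsize Δ_𝕊. Let (i_k)_{k≥1} be any sequence with i_k ∈ {1, …, n}, let P_req_k ∈ [min S_{i_k}, max S_{i_k}] for every k, define e_0 := 0, P_imp_k := proj_{S_{i_k}}(P_req_k − e_{k−1}) and e_k := e_{k−1} + P_imp_k − P_req_k, where proj_S(x) is any element of S at minimal distance from x. Then the instantaneous error satisfies |P_imp_k − P_req_k| ≤ Δ_𝕊 for every k ≥ 1. -/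
/-- The maximum stepsize of a finite set `S ⊂ ℝ`: the largest gap between consecutive
elements (`0` if `S` is a singleton, since the set of gaps is then empty and `sSup ∅ = 0`). -/
noncomputable def maxStep (S : Finset ℝ) : ℝ :=
  sSup {d : ℝ | ∃ a ∈ S, ∃ b ∈ S, a < b ∧ (∀ c ∈ S, c ≤ a ∨ b ≤ c) ∧ d = b - a}

/-- The maximum stepsize of a finite collection `𝕊 = {S_1, …, S_n}`. -/
noncomputable def maxStepColl {n : ℕ} (S : Fin n → Finset ℝ) : ℝ :=
  sSup (Set.range fun i => maxStep (S i))

/-!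
The accumulated error `e k` stays in `[-Δ/2, Δ/2]`: the target `Preq k - e (k-1)` is within
`Δ/2` of the interval `[min S, max S]`, so it is within `Δ/2` of some point of `S` (the nearest
endpoint if it lies outside, the nearer end of the gap containing it otherwise), and the new
error is exactly the distance from the target to its projection. The instantaneous error
`e k - e (k-1)` is then at most `Δ`.
-/

lemma maxStep_nonneg (S : Finset ℝ) : 0 ≤ maxStep S :=
  Real.sSup_nonneg fun _ ⟨_, _, _, _, hab, _, hd⟩ => hd ▸ (sub_pos.2 hab).le

lemma le_maxStep {S : Finset ℝ} {a b : ℝ} (ha : a ∈ S) (hb : b ∈ S) (hab : a < b)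
    (hgap : ∀ c ∈ S, c ≤ a ∨ b ≤ c) : b - a ≤ maxStep S := by
  have hS : S.Nonempty := ⟨a, ha⟩
  refine le_csSup ⟨S.max' hS - S.min' hS, ?_⟩ ⟨a, ha, b, hb, hab, hgap, rfl⟩
  rintro _ ⟨a', ha', b', hb', -, -, rfl⟩
  linarith [S.le_max' b' hb', S.min'_le a' ha']

lemma maxStep_le_maxStepColl {n : ℕ} (S : Fin n → Finset ℝ) (i : Fin n) :
    maxStep (S i) ≤ maxStepColl S :=
  le_csSup (Set.finite_range _).bddAbove ⟨i, rfl⟩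

lemma maxStepColl_nonneg {n : ℕ} (S : Fin n → Finset ℝ) : 0 ≤ maxStepColl S :=
  Real.sSup_nonneg fun _ ⟨i, hi⟩ => hi ▸ maxStep_nonneg (S i)

lemma exists_abs_sub_le_maxStep_div_two {S : Finset ℝ} (hS : S.Nonempty) {x : ℝ}
    (hx : x ∈ Set.Icc (S.min' hS) (S.max' hS)) : ∃ s ∈ S, |s - x| ≤ maxStep S / 2 := by
  classical
  have hA : (S.filter (· ≤ x)).Nonempty := ⟨_, Finset.mem_filter.2 ⟨S.min'_mem hS, hx.1⟩⟩
  have hB : (S.filter (x ≤ ·)).Nonempty := ⟨_, Finset.mem_filter.2 ⟨S.max'_mem hS, hx.2⟩⟩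
  obtain ⟨haS, hax⟩ := Finset.mem_filter.1 ((S.filter (· ≤ x)).max'_mem hA)
  obtain ⟨hbS, hxb⟩ := Finset.mem_filter.1 ((S.filter (x ≤ ·)).min'_mem hB)
  set a := (S.filter (· ≤ x)).max' hA
  set b := (S.filter (x ≤ ·)).min' hB
  rcases eq_or_lt_of_le hax with hxa | hax
  · exact ⟨a, haS, by rw [hxa, sub_self, abs_zero]; linarith [maxStep_nonneg S]⟩
  have hgap : ∀ c ∈ S, c ≤ a ∨ b ≤ c := fun c hc => (le_or_gt c x).imp
    (fun h => Finset.le_max' _ c (Finset.mem_filter.2 ⟨hc, h⟩))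
    (fun h => Finset.min'_le _ c (Finset.mem_filter.2 ⟨hc, h.le⟩))
  have hba := le_maxStep haS hbS (hax.trans_le hxb) hgap
  rcases le_total (x - a) (b - x) with h | h
  · exact ⟨a, haS, by rw [abs_sub_comm, abs_of_pos (sub_pos.2 hax)]; linarith⟩
  · exact ⟨b, hbS, by rw [abs_of_nonneg (sub_nonneg.2 hxb)]; linarith⟩

lemma abs_nearest_sub_le {S : Finset ℝ} (hS : S.Nonempty) {p ε r q : ℝ}
    (hp : p ∈ Set.Icc (S.min' hS) (S.max' hS)) (hε : |ε| ≤ r) (hr : maxStep S ≤ 2 * r)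
    (hq : ∀ s ∈ S, |q - (p - ε)| ≤ |s - (p - ε)|) : |q - (p - ε)| ≤ r := by
  obtain ⟨hε₁, hε₂⟩ := abs_le.1 hε
  suffices ∃ s ∈ S, |s - (p - ε)| ≤ r from
    let ⟨s, hs, hsr⟩ := this; (hq s hs).trans hsr
  by_cases hlo : p - ε < S.min' hS
  · exact ⟨_, S.min'_mem hS, by rw [abs_of_pos (sub_pos.2 hlo)]; linarith [hp.1]⟩
  by_cases hhi : S.max' hS < p - ε
  · exact ⟨_, S.max'_mem hS, by rw [abs_of_neg (sub_neg.2 hhi)]; linarith [hp.2]⟩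
  obtain ⟨s, hs, hsx⟩ := exists_abs_sub_le_maxStep_div_two hS ⟨not_lt.1 hlo, not_lt.1 hhi⟩
  exact ⟨s, hs, by linarith⟩

theorem stmt7_general (n : ℕ) (S : Fin n → Finset ℝ) (hS : ∀ i, (S i).Nonempty)
    (idx : ℕ → Fin n) (Preq Pimp e : ℕ → ℝ)
    (hreq : ∀ k : ℕ, 1 ≤ k →
      Preq k ∈ Set.Icc ((S (idx k)).min' (hS _)) ((S (idx k)).max' (hS _)))
    (he0 : e 0 = 0)
    (hproj : ∀ k : ℕ, 1 ≤ k → ∀ s ∈ S (idx k),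
      |Pimp k - (Preq k - e (k - 1))| ≤ |s - (Preq k - e (k - 1))|)
    (he : ∀ k : ℕ, 1 ≤ k → e k = e (k - 1) + Pimp k - Preq k) :
    ∀ k : ℕ, 1 ≤ k → |Pimp k - Preq k| ≤ maxStepColl S := by
  have herr : ∀ k, |e k| ≤ maxStepColl S / 2 := by
    intro k
    induction k with
    | zero => rw [he0, abs_zero]; linarith [maxStepColl_nonneg S]
    | succ k ih =>
      have hk : 1 ≤ k + 1 := k.succ_pos
      have hnext : e (k + 1) = Pimp (k + 1) - (Preq (k + 1) - e k) := by rw [he _ hk, Nat.add_sub_cancel]; ring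
      rw [hnext]
      exact abs_nearest_sub_le (hS _) (hreq _ hk) ih
        (by linarith [maxStep_le_maxStepColl S (idx (k + 1))]) (hproj _ hk)
  intro k hk
  calc |Pimp k - Preq k| = |e k - e (k - 1)| := by rw [he k hk]; ring_nf
    _ ≤ |e k| + |e (k - 1)| := abs_sub _ _
    _ ≤ maxStepColl S := by linarith [herr k, herr (k - 1)]

/-- Under the error-diffusion rule of Statement 6, the instantaneous error
satisfies `|P_imp_k − P_req_k| ≤ Δ_𝕊` for every `k ≥ 1`. -/
theorem stmt7 (n : ℕ) (hn : 1 ≤ n) (S : Fin n → Finset ℝ) (hS : ∀ i, (S i).Nonempty)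
    (idx : ℕ → Fin n) (Preq Pimp e : ℕ → ℝ)
    (hreq : ∀ k : ℕ, 1 ≤ k →
      Preq k ∈ Set.Icc ((S (idx k)).min' (hS _)) ((S (idx k)).max' (hS _)))
    (he0 : e 0 = 0)
    (hmem : ∀ k : ℕ, 1 ≤ k → Pimp k ∈ S (idx k))
    (hproj : ∀ k : ℕ, 1 ≤ k → ∀ s ∈ S (idx k),
      |Pimp k - (Preq k - e (k - 1))| ≤ |s - (Preq k - e (k - 1))|)
    (he : ∀ k : ℕ, 1 ≤ k → e k = e (k - 1) + Pimp k - Preq k) :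
    ∀ k : ℕ, 1 ≤ k → |Pimp k - Preq k| ≤ maxStepColl S :=
  stmt7_general n S hS idx Preq Pimp e hreq he0 hproj he
end

section
/- Let P_max ≥ 0 and 0 ≤ φ < π/2, and for x ∈ [0, P_max] define T(x) := {(P, Q) ∈ ℝ² : 0 ≤ P ≤ x and |Q| ≤ P·tan φ}. Let (p_max_k)_{k≥0} be any sequence of nonnegative reals and set I_k := T(min(p_max_k, P_max)). Let (u_req_k)_{k≥1} satisfy u_req_k ∈ I_{k−1} for every k ≥ 1, define e_0 := 0, and recursively u_imp_k := proj_{I_k}(u_req_k − e_{k−1}) and e_k := e_{k−1} + u_imp_k − u_req_k, where proj_{I_k} is the nearest-point projection onto the closed convex set I_k. Then ‖e_k‖ ≤ max{P_max/cos φ, 2·P_max·tan φ} for all k ≥ 1. -/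
/-!
The invariant is `-e k ∈ T (P_max - x k)` with `x k = min (p_max k) P_max`. Triangles add, so
`v = u_req (k+1) - e k ∈ T (x k) + T (P_max - x k) ⊆ T P_max`. For such `v` the
projection onto `T (x (k+1))` is explicit: keep `v` if it already lies in the triangle, otherwise
cut its first coordinate down to `x (k+1)` and clip the second one to `±x (k+1) tan φ`. The
residual `v - proj v = -e (k+1)` then lies in `T (P_max - x (k+1))`, and every point of
`T P_max` has norm at most `P_max √(1 + tan² φ) = P_max / cos φ`.
-/

theorem EuclideanSpace.norm_le_norm_of_forall_abs_le {ι : Type*} [Fintype ι]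
    {a b : EuclideanSpace ℝ ι} (h : ∀ i, |a i| ≤ |b i|) : ‖a‖ ≤ ‖b‖ := by
  simp only [EuclideanSpace.norm_eq, Real.norm_eq_abs]
  exact Real.sqrt_le_sqrt (Finset.sum_le_sum fun i _ => pow_le_pow_left₀ (abs_nonneg _) (h i) 2)

theorem Convex.eq_of_forall_norm_sub_le {E : Type*} [NormedAddCommGroup E] [NormedSpace ℝ E]
    [StrictConvexSpace ℝ E] {K : Set E} (hK : Convex ℝ K) {v p w : E} (hp : p ∈ K) (hw : w ∈ K)
    (hpmin : ∀ c ∈ K, ‖v - p‖ ≤ ‖v - c‖) (hwmin : ∀ c ∈ K, ‖v - w‖ ≤ ‖v - c‖) : p = w := by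
  have heq : ‖v - p‖ = ‖v - w‖ := le_antisymm (hpmin w hw) (hwmin p hp)
  have hmid : ‖v - p‖ ≤ ‖v - ((2 : ℝ)⁻¹ • p + (2 : ℝ)⁻¹ • w)‖ :=
    hpmin _ (hK hp hw (by norm_num) (by norm_num) (by norm_num))
  have hsum : v - ((2 : ℝ)⁻¹ • p + (2 : ℝ)⁻¹ • w) = (2 : ℝ)⁻¹ • ((v - p) + (v - w)) := by
    module
  rw [hsum, norm_smul, Real.norm_of_nonneg (by norm_num)] at hmid
  have hadd : ‖(v - p) + (v - w)‖ = ‖v - p‖ + ‖v - w‖ :=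
    le_antisymm (norm_add_le _ _) (by linarith)
  simpa using eq_of_norm_eq_of_norm_add_eq heq hadd

theorem abs_sub_max_neg_min_le {a b : ℝ} (v : ℝ) (hab : a ≤ b) (hv : |v| ≤ b) :
    |v - max (-a) (min v a)| ≤ b - a := by
  grind

theorem abs_sub_max_min_le {l h c : ℝ} (v : ℝ) (hlc : l ≤ c) (hch : c ≤ h) :
    |v - max l (min v h)| ≤ |v - c| := by
  grind

/-- The triangle `T(x)` of the statement, with `t = tan φ`. -/
def triangle (t x : ℝ) : Set (EuclideanSpace ℝ (Fin 2)) :=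
  {p | 0 ≤ p 0 ∧ p 0 ≤ x ∧ |p 1| ≤ p 0 * t}

namespace triangle

variable {t x y z : ℝ} {p q v : EuclideanSpace ℝ (Fin 2)}

theorem convex : Convex ℝ (triangle t x) := by
  rintro p ⟨hp0, hpx, hp1⟩ q ⟨hq0, hqx, hq1⟩ a b ha hb hab
  simp only [triangle, Set.mem_ofPred_eq, PiLp.add_apply, PiLp.smul_apply, smul_eq_mul]
  refine ⟨by positivity, by nlinarith, ?_⟩
  calc |a * p 1 + b * q 1| ≤ a * |p 1| + b * |q 1| := by
        simpa [abs_mul, abs_of_nonneg ha, abs_of_nonneg hb] using abs_add_le (a * p 1) (b * q 1)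
    _ ≤ (a * p 0 + b * q 0) * t := by nlinarith

theorem add_mem (hp : p ∈ triangle t x) (hq : q ∈ triangle t y) :
    p + q ∈ triangle t (x + y) := by
  obtain ⟨hp0, hpx, hp1⟩ := hp
  obtain ⟨hq0, hqy, hq1⟩ := hq
  simp only [triangle, Set.mem_ofPred_eq, PiLp.add_apply]
  exact ⟨by linarith, by linarith, (abs_add_le _ _).trans (by linarith)⟩

theorem norm_le (hp : p ∈ triangle t x) : ‖p‖ ≤ x * √(1 + t ^ 2) := by
  obtain ⟨hp0, hpx, hp1⟩ := hp
  have h0 : p 0 ^ 2 ≤ x ^ 2 := pow_le_pow_left₀ hp0 hpx 2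
  have h1 : p 1 ^ 2 ≤ (p 0 * t) ^ 2 := by
    simpa using pow_le_pow_left₀ (abs_nonneg _) hp1 2
  calc ‖p‖ = √(p 0 ^ 2 + p 1 ^ 2) := by simp [EuclideanSpace.norm_eq, Fin.sum_univ_two]
    _ ≤ √(x ^ 2 * (1 + t ^ 2)) :=
      Real.sqrt_le_sqrt (by nlinarith [mul_le_mul_of_nonneg_right h0 (sq_nonneg t)])
    _ = x * √(1 + t ^ 2) := by rw [Real.sqrt_mul (sq_nonneg x), Real.sqrt_sq (hp0.trans hpx)]

/-- The nearest point of `triangle t y` to `v`, provided `v` lies in the cone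
`0 ≤ v 0`, `|v 1| ≤ v 0 * t`. -/
noncomputable def nearestPoint (t y : ℝ) (v : EuclideanSpace ℝ (Fin 2)) :
    EuclideanSpace ℝ (Fin 2) :=
  if v 0 ≤ y then v else !₂[y, max (-(y * t)) (min (v 1) (y * t))]

theorem nearestPoint_mem (ht : 0 ≤ t) (hy : 0 ≤ y) (hv : v ∈ triangle t z) :
    nearestPoint t y v ∈ triangle t y := by
  unfold nearestPoint
  split_ifs with hvy
  · exact ⟨hv.1, hvy, hv.2.2⟩
  · refine ⟨by simpa using hy, by simp, ?_⟩
    have hyt : 0 ≤ y * t := mul_nonneg hy ht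
    simpa using abs_le.2 ⟨le_max_left _ _, max_le (by linarith) (min_le_right _ _)⟩

theorem norm_sub_nearestPoint_le (ht : 0 ≤ t) (hp : p ∈ triangle t y) :
    ‖v - nearestPoint t y v‖ ≤ ‖v - p‖ := by
  unfold nearestPoint
  split_ifs with hvy
  · simp
  obtain ⟨-, hpy, hp1⟩ := hp
  have hpt : |p 1| ≤ y * t := hp1.trans (mul_le_mul_of_nonneg_right hpy ht)
  refine EuclideanSpace.norm_le_norm_of_forall_abs_le (Fin.forall_fin_two.2 ⟨?_, ?_⟩)
  · simp only [Fin.isValue, PiLp.sub_apply, Matrix.cons_val_zero]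
    rw [abs_of_pos (by linarith), abs_of_pos (by linarith)]
    linarith
  · simpa using abs_sub_max_min_le (v 1) (neg_le_of_abs_le hpt) (le_of_abs_le hpt)

theorem sub_nearestPoint_mem (ht : 0 ≤ t) (hyz : y ≤ z) (hv : v ∈ triangle t z) :
    v - nearestPoint t y v ∈ triangle t (z - y) := by
  unfold nearestPoint
  split_ifs with hvy
  · simpa [triangle] using hyz
  obtain ⟨-, hvz, hv1⟩ := hv
  have hyt := mul_le_mul_of_nonneg_right (le_of_not_ge hvy) ht
  simp only [triangle, Set.mem_ofPred_eq, PiLp.sub_apply, Matrix.cons_val_zero,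
    Matrix.cons_val_one, Matrix.cons_val_fin_one]
  refine ⟨by linarith, by linarith, ?_⟩
  rw [sub_mul]
  exact abs_sub_max_neg_min_le (v 1) hyt hv1

theorem sub_mem_of_forall_norm_sub_le (ht : 0 ≤ t) (hy : 0 ≤ y) (hyz : y ≤ z)
    (hv : v ∈ triangle t z) (hp : p ∈ triangle t y)
    (hpmin : ∀ c ∈ triangle t y, ‖v - p‖ ≤ ‖v - c‖) : v - p ∈ triangle t (z - y) := by
  rw [convex.eq_of_forall_norm_sub_le hp (nearestPoint_mem ht hy hv) hpmin
    fun c hc => norm_sub_nearestPoint_le ht hc]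
  exact sub_nearestPoint_mem ht hyz hv

end triangle

theorem neg_error_mem_triangle {t P : ℝ} (ht : 0 ≤ t) {x : ℕ → ℝ} (hx0 : ∀ k, 0 ≤ x k)
    (hxP : ∀ k, x k ≤ P) {proj : ℕ → EuclideanSpace ℝ (Fin 2) → EuclideanSpace ℝ (Fin 2)}
    (hprojmem : ∀ k v, proj k v ∈ triangle t (x k))
    (hprojmin : ∀ k v, ∀ c ∈ triangle t (x k), ‖v - proj k v‖ ≤ ‖v - c‖)
    {u e : ℕ → EuclideanSpace ℝ (Fin 2)} (hu : ∀ k, u (k + 1) ∈ triangle t (x k))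
    (he0 : e 0 = 0) (he : ∀ k, e (k + 1) = e k + proj (k + 1) (u (k + 1) - e k) - u (k + 1)) :
    ∀ k, -e k ∈ triangle t (P - x k) := by
  intro k
  induction k with
  | zero => simpa [he0, triangle] using hxP 0
  | succ k ih =>
    have hv : u (k + 1) - e k ∈ triangle t P := by
      simpa [sub_eq_add_neg] using triangle.add_mem (hu k) ih
    rw [he k, neg_sub, sub_add_eq_sub_sub]
    exact triangle.sub_mem_of_forall_norm_sub_le ht (hx0 _) (hxP _) hv (hprojmem _ _)
      (hprojmin _ _)

/-- Error diffusion for a PV resource agent. With feasible triangles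
`I_k = T(min(p_max_k, P_max))` where `T(x) = {(P, Q) : 0 ≤ P ≤ x, |Q| ≤ P tan φ}`,
persistent-predictor advertisement (`u_req_k ∈ I_{k−1}`) and nearest-point projection,
the accumulated error satisfies `‖e_k‖ ≤ max {P_max/cos φ, 2 P_max tan φ}` for all
`k ≥ 1`. -/
theorem stmt15 (Pmax : ℝ) (hP : 0 ≤ Pmax) (φ : ℝ) (hφ0 : 0 ≤ φ) (hφ : φ < Real.pi / 2)
    (T : ℝ → Set (EuclideanSpace ℝ (Fin 2)))
    (hT : ∀ x, T x = {p : EuclideanSpace ℝ (Fin 2) |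
      0 ≤ p 0 ∧ p 0 ≤ x ∧ |p 1| ≤ p 0 * Real.tan φ})
    (pmax : ℕ → ℝ) (hpmax : ∀ k, 0 ≤ pmax k)
    (I : ℕ → Set (EuclideanSpace ℝ (Fin 2)))
    (hI : ∀ k, I k = T (min (pmax k) Pmax))
    (proj : ℕ → EuclideanSpace ℝ (Fin 2) → EuclideanSpace ℝ (Fin 2))
    (hprojmem : ∀ k v, proj k v ∈ I k)
    (hprojmin : ∀ k v, ∀ w ∈ I k, ‖v - proj k v‖ ≤ ‖v - w‖)
    (u_req u_imp e : ℕ → EuclideanSpace ℝ (Fin 2))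
    (hreq : ∀ k : ℕ, 1 ≤ k → u_req k ∈ I (k - 1))
    (he0 : e 0 = 0)
    (himp : ∀ k : ℕ, 1 ≤ k → u_imp k = proj k (u_req k - e (k - 1)))
    (he : ∀ k : ℕ, 1 ≤ k → e k = e (k - 1) + u_imp k - u_req k) :
    ∀ k : ℕ, 1 ≤ k → ‖e k‖ ≤ max (Pmax / Real.cos φ) (2 * Pmax * Real.tan φ) := by
  intro k _
  have ht : 0 ≤ Real.tan φ := Real.tan_nonneg_of_nonneg_of_le_pi_div_two hφ0 hφ.le
  have hcos : 0 < Real.cos φ := Real.cos_pos_of_mem_Ioo ⟨by linarith [Real.pi_pos], hφ⟩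
  have hIk : ∀ k, I k = triangle (Real.tan φ) (min (pmax k) Pmax) := fun k => by
    rw [hI, hT]; rfl
  simp only [hIk] at hprojmem hprojmin hreq
  have hinv := neg_error_mem_triangle ht (fun k => le_min (hpmax k) hP)
    (fun k => min_le_right _ Pmax) hprojmem hprojmin (fun k => hreq (k + 1) (by omega)) he0
    (fun k => by rw [he (k + 1) (by omega), himp (k + 1) (by omega), Nat.add_sub_cancel]) k
  have hsec : √(1 + Real.tan φ ^ 2) = (Real.cos φ)⁻¹ := by
    rw [← Real.inv_sqrt_one_add_tan_sq hcos, inv_inv]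
  calc ‖e k‖ = ‖-e k‖ := (norm_neg _).symm
    _ ≤ (Pmax - min (pmax k) Pmax) * √(1 + Real.tan φ ^ 2) := triangle.norm_le hinv
    _ ≤ Pmax * √(1 + Real.tan φ ^ 2) := by
      gcongr; linarith [le_min (hpmax k) hP]
    _ = Pmax / Real.cos φ := by rw [hsec, div_eq_mul_inv]
    _ ≤ _ := le_max_left _ _
end
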